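/- (Convexity bound in the Slider Theorem.) For an integer d ≥ 2, an integer k ≥ 1, and a real number β ≥ 1, define F(β, d, k) = (1 − d^{−(2k+1)}) · (1 − ((k−1)/k)²) · (1 − (1 − d^{−(2k−1)})/(1 + βd²/2)) · (d/(d+1))² · (β(d³ + d² − 2d + 1) + 4d − 2)/((d−1)(βd² + 2)). Then 0 ≤ F(β, d, k) ≤ 1. -/
import Mathlib
set_option maxHeartbeats 1000000


/-- The closed-form expression `F(β, d, k)` for `1 − p`, where `p` is the
Isotropic Entanglement mixing parameter for a chain of `N = 2k+1` qudits of
dimension `d` with local terms having `β`-Haar distributed eigenvectors. -/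
noncomputable def sliderF (β : ℝ) (d k : ℕ) : ℝ :=
  (1 - ((d : ℝ) ^ (2 * k + 1))⁻¹) *
  (1 - (((k : ℝ) - 1) / (k : ℝ)) ^ 2) *
  (1 - (1 - ((d : ℝ) ^ (2 * k - 1))⁻¹) / (1 + β * (d : ℝ) ^ 2 / 2)) *
  ((d : ℝ) / ((d : ℝ) + 1)) ^ 2 *
  ((β * ((d : ℝ) ^ 3 + (d : ℝ) ^ 2 - 2 * (d : ℝ) + 1) + 4 * (d : ℝ) - 2) /
    (((d : ℝ) - 1) * (β * (d : ℝ) ^ 2 + 2)))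

/-- Key polynomial inequality: after clearing denominators, the product of the
worst-case third factor with the last two factors is at most 1. -/
lemma slider_key_poly (β c : ℝ) (hβ : 1 ≤ β) (hc : 2 ≤ c) :
    c * (β * c ^ 3 + 2) * (β * (c ^ 3 + c ^ 2 - 2 * c + 1) + 4 * c - 2) ≤
      (c + 1) ^ 2 * (c - 1) * (β * c ^ 2 + 2) ^ 2 := by
  have hs : (0 : ℝ) ≤ β - 1 := by linarith
  have he : (0 : ℝ) ≤ c - 2 := by linarith
  have t2 : 0 ≤ (c - 2) ^ 2 := pow_nonneg he 2
  have t3 : 0 ≤ (c - 2) ^ 3 := pow_nonneg he 3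
  have t4 : 0 ≤ (c - 2) ^ 4 := pow_nonneg he 4
  have t5 : 0 ≤ (c - 2) ^ 5 := pow_nonneg he 5
  have s1 : 0 ≤ (β - 1) * (c - 2) := mul_nonneg hs he
  have s2 : 0 ≤ (β - 1) * (c - 2) ^ 2 := mul_nonneg hs t2
  have s3 : 0 ≤ (β - 1) * (c - 2) ^ 3 := mul_nonneg hs t3
  have s4 : 0 ≤ (β - 1) * (c - 2) ^ 4 := mul_nonneg hs t4
  have s5 : 0 ≤ (β - 1) * (c - 2) ^ 5 := mul_nonneg hs t5
  have hss : 0 ≤ (β - 1) ^ 2 := sq_nonneg _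
  have q1 : 0 ≤ (β - 1) ^ 2 * (c - 2) := mul_nonneg hss he
  have q2 : 0 ≤ (β - 1) ^ 2 * (c - 2) ^ 2 := mul_nonneg hss t2
  have q3 : 0 ≤ (β - 1) ^ 2 * (c - 2) ^ 3 := mul_nonneg hss t3
  have q4 : 0 ≤ (β - 1) ^ 2 * (c - 2) ^ 4 := mul_nonneg hss t4
  have q5 : 0 ≤ (β - 1) ^ 2 * (c - 2) ^ 5 := mul_nonneg hss t5
  have hid : (c + 1) ^ 2 * (c - 1) * (β * c ^ 2 + 2) ^ 2 -
      c * (β * c ^ 3 + 2) * (β * (c ^ 3 + c ^ 2 - 2 * c + 1) + 4 * c - 2) =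
      24 + 102 * (c - 2) + 112 * (c - 2) ^ 2 + 54 * (c - 2) ^ 3 +
      12 * (c - 2) ^ 4 + (c - 2) ^ 5 +
      12 * (β - 1) + 86 * ((β - 1) * (c - 2)) + 124 * ((β - 1) * (c - 2) ^ 2) +
      74 * ((β - 1) * (c - 2) ^ 3) + 20 * ((β - 1) * (c - 2) ^ 4) +
      2 * ((β - 1) * (c - 2) ^ 5) +
      16 * ((β - 1) ^ 2 * (c - 2)) + 32 * ((β - 1) ^ 2 * (c - 2) ^ 2) +
      24 * ((β - 1) ^ 2 * (c - 2) ^ 3) + 8 * ((β - 1) ^ 2 * (c - 2) ^ 4) +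
      ((β - 1) ^ 2 * (c - 2) ^ 5) := by ring
  nlinarith [hid, he, hs, t2, t3, t4, t5, s1, s2, s3, s4, s5, q1, q2, q3, q4, q5]

/-- **convexity bound in the Slider Theorem.** For integers
`d ≥ 2`, `k ≥ 1` and a real `β ≥ 1`, the quantity `F(β, d, k) = 1 − p`
satisfies `0 ≤ F(β, d, k) ≤ 1`. -/
theorem slider_convexity_bound (d k : ℕ) (hd : 2 ≤ d) (hk : 1 ≤ k)
    (β : ℝ) (hβ : 1 ≤ β) :
    0 ≤ sliderF β d k ∧ sliderF β d k ≤ 1 := by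
  set c : ℝ := (d : ℝ) with hcdef
  have hc : (2 : ℝ) ≤ c := by rw [hcdef]; exact_mod_cast hd
  have hc0 : (0 : ℝ) < c := by linarith
  have hc1 : (1 : ℝ) ≤ c := by linarith
  have hkR : (1 : ℝ) ≤ (k : ℝ) := by exact_mod_cast hk
  have hk0 : (0 : ℝ) < (k : ℝ) := by linarith
  -- Factor A
  have hpowA : (1 : ℝ) ≤ c ^ (2 * k + 1) := one_le_pow₀ hc1
  have hA0 : 0 ≤ 1 - (c ^ (2 * k + 1))⁻¹ := by
    have : (c ^ (2 * k + 1))⁻¹ ≤ 1 := by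
      rw [inv_le_one_iff₀]; right; exact hpowA
    linarith
  have hA1 : 1 - (c ^ (2 * k + 1))⁻¹ ≤ 1 := by
    have : 0 ≤ (c ^ (2 * k + 1))⁻¹ := inv_nonneg.mpr (by positivity)
    linarith
  -- Factor B
  have hB0 : 0 ≤ 1 - (((k : ℝ) - 1) / (k : ℝ)) ^ 2 := by
    have h1 : ((k : ℝ) - 1) / (k : ℝ) ≤ 1 := by
      rw [div_le_one hk0]; linarith
    have h2 : 0 ≤ ((k : ℝ) - 1) / (k : ℝ) := div_nonneg (by linarith) (le_of_lt hk0)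
    nlinarith
  have hB1 : 1 - (((k : ℝ) - 1) / (k : ℝ)) ^ 2 ≤ 1 := by
    nlinarith [sq_nonneg (((k : ℝ) - 1) / (k : ℝ))]
  -- Common denominators
  have hden : (1 : ℝ) ≤ 1 + β * c ^ 2 / 2 := by nlinarith
  have hden0 : (0 : ℝ) < 1 + β * c ^ 2 / 2 := by linarith
  -- Factor C
  have hx0 : 0 ≤ (c ^ (2 * k - 1))⁻¹ := inv_nonneg.mpr (by positivity)
  have hC0 : 0 ≤ 1 - (1 - (c ^ (2 * k - 1))⁻¹) / (1 + β * c ^ 2 / 2) := by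
    have hnum : 1 - (c ^ (2 * k - 1))⁻¹ ≤ 1 + β * c ^ 2 / 2 := by linarith
    have := div_le_one_of_le₀ hnum (le_of_lt hden0)
    linarith
  -- C ≤ Cmax, since c ≤ c^(2k-1), so (c^(2k-1))⁻¹ ≤ c⁻¹
  have hkne : 2 * k - 1 ≠ 0 := by omega
  have hcle : c ≤ c ^ (2 * k - 1) := le_self_pow₀ hc1 hkne
  have hxle : (c ^ (2 * k - 1))⁻¹ ≤ c⁻¹ := by
    apply inv_anti₀ hc0 hcle
  have hCmax : 1 - (1 - (c ^ (2 * k - 1))⁻¹) / (1 + β * c ^ 2 / 2) ≤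
      1 - (1 - c⁻¹) / (1 + β * c ^ 2 / 2) := by
    have hnum : 1 - c⁻¹ ≤ 1 - (c ^ (2 * k - 1))⁻¹ := by linarith
    have hmono : (1 - c⁻¹) / (1 + β * c ^ 2 / 2) ≤
        (1 - (c ^ (2 * k - 1))⁻¹) / (1 + β * c ^ 2 / 2) :=
      div_le_div_of_nonneg_right hnum hden0.le
    linarith
  -- Factor D
  have hD0 : 0 ≤ (c / (c + 1)) ^ 2 := sq_nonneg _
  -- Factor E
  have hEnum : 0 ≤ β * (c ^ 3 + c ^ 2 - 2 * c + 1) + 4 * c - 2 := by nlinarith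
  have hEden : 0 < (c - 1) * (β * c ^ 2 + 2) := by nlinarith
  have hE0 : 0 ≤ (β * (c ^ 3 + c ^ 2 - 2 * c + 1) + 4 * c - 2) /
      ((c - 1) * (β * c ^ 2 + 2)) := div_nonneg hEnum (le_of_lt hEden)
  -- Key bound: Cmax * (D * E) ≤ 1
  have hc1' : (0 : ℝ) < c + 1 := by linarith
  have hBden : (0 : ℝ) < (c + 1) ^ 2 * (c - 1) * (β * c ^ 2 + 2) ^ 2 := by
    have h1 : (0 : ℝ) < β * c ^ 2 + 2 := by nlinarith
    have h2 : (0 : ℝ) < c - 1 := by linarith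
    exact mul_pos (mul_pos (pow_pos hc1' 2) h2) (pow_pos h1 2)
  have hkey : (1 - (1 - c⁻¹) / (1 + β * c ^ 2 / 2)) *
      ((c / (c + 1)) ^ 2 * ((β * (c ^ 3 + c ^ 2 - 2 * c + 1) + 4 * c - 2) /
        ((c - 1) * (β * c ^ 2 + 2)))) ≤ 1 := by
    have hid : 1 - (1 - (1 - c⁻¹) / (1 + β * c ^ 2 / 2)) *
        ((c / (c + 1)) ^ 2 * ((β * (c ^ 3 + c ^ 2 - 2 * c + 1) + 4 * c - 2) /
          ((c - 1) * (β * c ^ 2 + 2)))) =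
        ((c + 1) ^ 2 * (c - 1) * (β * c ^ 2 + 2) ^ 2 -
          c * (β * c ^ 3 + 2) * (β * (c ^ 3 + c ^ 2 - 2 * c + 1) + 4 * c - 2)) /
        ((c + 1) ^ 2 * (c - 1) * (β * c ^ 2 + 2) ^ 2) := by
      have h1 : c ≠ 0 := ne_of_gt hc0
      have h2 : c + 1 ≠ 0 := ne_of_gt hc1'
      have h3 : c - 1 ≠ 0 := by intro h; nlinarith [h]
      have h4 : β * c ^ 2 + 2 ≠ 0 := by nlinarith
      have h5 : 1 + β * c ^ 2 / 2 ≠ 0 := ne_of_gt hden0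
      field_simp
      ring
    have hnum : 0 ≤ (c + 1) ^ 2 * (c - 1) * (β * c ^ 2 + 2) ^ 2 -
        c * (β * c ^ 3 + 2) * (β * (c ^ 3 + c ^ 2 - 2 * c + 1) + 4 * c - 2) := by
      have := slider_key_poly β c hβ hc
      linarith
    have := div_nonneg hnum (le_of_lt hBden)
    linarith [hid ▸ this]
  -- Assemble
  constructor
  · unfold sliderF
    exact mul_nonneg (mul_nonneg (mul_nonneg (mul_nonneg hA0 hB0) hC0) hD0) hE0
  · unfold sliderF
    have hAB : (1 - (c ^ (2 * k + 1))⁻¹) * (1 - (((k : ℝ) - 1) / (k : ℝ)) ^ 2) ≤ 1 :=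
      mul_le_one₀ hA1 hB0 hB1
    have hABC : (1 - (c ^ (2 * k + 1))⁻¹) * (1 - (((k : ℝ) - 1) / (k : ℝ)) ^ 2) *
        (1 - (1 - (c ^ (2 * k - 1))⁻¹) / (1 + β * c ^ 2 / 2)) ≤
        1 - (1 - c⁻¹) / (1 + β * c ^ 2 / 2) := by
      calc (1 - (c ^ (2 * k + 1))⁻¹) * (1 - (((k : ℝ) - 1) / (k : ℝ)) ^ 2) *
          (1 - (1 - (c ^ (2 * k - 1))⁻¹) / (1 + β * c ^ 2 / 2))
          ≤ 1 * (1 - (1 - (c ^ (2 * k - 1))⁻¹) / (1 + β * c ^ 2 / 2)) :=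
            mul_le_mul_of_nonneg_right hAB hC0
        _ = 1 - (1 - (c ^ (2 * k - 1))⁻¹) / (1 + β * c ^ 2 / 2) := one_mul _
        _ ≤ 1 - (1 - c⁻¹) / (1 + β * c ^ 2 / 2) := hCmax
    have hDE : 0 ≤ (c / (c + 1)) ^ 2 * ((β * (c ^ 3 + c ^ 2 - 2 * c + 1) + 4 * c - 2) /
        ((c - 1) * (β * c ^ 2 + 2))) := mul_nonneg hD0 hE0
    calc (1 - (c ^ (2 * k + 1))⁻¹) * (1 - (((k : ℝ) - 1) / (k : ℝ)) ^ 2) *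
        (1 - (1 - (c ^ (2 * k - 1))⁻¹) / (1 + β * c ^ 2 / 2)) *
        (c / (c + 1)) ^ 2 *
        ((β * (c ^ 3 + c ^ 2 - 2 * c + 1) + 4 * c - 2) /
          ((c - 1) * (β * c ^ 2 + 2)))
        = ((1 - (c ^ (2 * k + 1))⁻¹) * (1 - (((k : ℝ) - 1) / (k : ℝ)) ^ 2) *
          (1 - (1 - (c ^ (2 * k - 1))⁻¹) / (1 + β * c ^ 2 / 2))) *
          ((c / (c + 1)) ^ 2 * ((β * (c ^ 3 + c ^ 2 - 2 * c + 1) + 4 * c - 2) /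
            ((c - 1) * (β * c ^ 2 + 2)))) := by ring
      _ ≤ (1 - (1 - c⁻¹) / (1 + β * c ^ 2 / 2)) *
          ((c / (c + 1)) ^ 2 * ((β * (c ^ 3 + c ^ 2 - 2 * c + 1) + 4 * c - 2) /
            ((c - 1) * (β * c ^ 2 + 2)))) :=
          mul_le_mul_of_nonneg_right hABC hDE
      _ ≤ 1 := hkey
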